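/- Let d be a pseudo k-diagram with a(d)=1 whose unique non-propagating north edge joins i to i+1, and let d′ be another pseudo k-diagram with a(d′)=1 whose unique non-propagating south edge joins j′ to (j+1)′. If j ∈ {i−1, i, i+1}, then a(d′d)=1. -/
import Mathlib


/-- Embedding of the nodes of the top diagram `d'` into the three-layer node set
(top layer = north face of `d'`, middle layer = interface, bottom layer = south
face of `d`). -/
def emb1 (k : ℕ) : Fin k ⊕ Fin k → Fin k ⊕ (Fin k ⊕ Fin k) :=
  Sum.elim Sum.inl (fun i => Sum.inr (Sum.inl i))

/-- Embedding of the nodes of the bottom diagram `d` into the three-layer node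
set. -/
def emb2 (k : ℕ) : Fin k ⊕ Fin k → Fin k ⊕ (Fin k ⊕ Fin k) :=
  Sum.elim (fun i => Sum.inr (Sum.inl i)) (fun i => Sum.inr (Sum.inr i))

/-- One step along an edge of `d'` (top two layers) or of `d` (bottom two
layers), where the matchings are given as involutions `f'` and `f`. -/
def glueRel (k : ℕ) (f' f : Fin k ⊕ Fin k → Fin k ⊕ Fin k)
    (x y : Fin k ⊕ (Fin k ⊕ Fin k)) : Prop :=
  (∃ p, x = emb1 k p ∧ y = emb1 k (f' p)) ∨ (∃ p, x = emb2 k p ∧ y = emb2 k (f p))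

/-- In the concatenation `d'd`, a north node `i` lies on a non-propagating
north edge iff it is connected to a different top-layer node. -/
def nonPropTop (k : ℕ) (f' f : Fin k ⊕ Fin k → Fin k ⊕ Fin k) (i : Fin k) : Prop :=
  ∃ j, j ≠ i ∧ Relation.ReflTransGen (glueRel k f' f) (Sum.inl i) (Sum.inl j)

section Aux

variable {k : ℕ}

private lemma mem_pair_of_card_two {α : Type*} {S : Set α} {a b : α} (hab : a ≠ b)
    (ha : a ∈ S) (hb : b ∈ S) (hS : Nat.card S = 2) : ∀ m ∈ S, m = a ∨ m = b := by
  have hS' : S.ncard = 2 := by rw [← Nat.card_coe_set_eq]; exact hS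
  have hfin : S.Finite := Set.finite_of_ncard_ne_zero (by omega)
  have hpair : ({a, b} : Set α) = S := by
    apply Set.eq_of_subset_of_ncard_le
    · intro x hx
      rcases hx with rfl | hx
      · exact ha
      · rcases hx with rfl; exact hb
    · rw [hS', Set.ncard_pair hab]
    · exact hfin
  intro m hm
  rw [← hpair] at hm
  simpa using hm

private lemma card_cross (g : Fin k ⊕ Fin k → Fin k ⊕ Fin k) (hinv : ∀ x, g (g x) = x) :
    Nat.card {p : Fin k | (g (Sum.inl p)).isRight = true} =
      Nat.card {p : Fin k | (g (Sum.inr p)).isLeft = true} := by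
  apply Nat.card_congr
  refine ⟨fun x => ⟨(g (Sum.inl x.1)).getRight x.2, ?_⟩,
          fun y => ⟨(g (Sum.inr y.1)).getLeft y.2, ?_⟩, ?_, ?_⟩
  · show (g (Sum.inr _)).isLeft = true
    rw [Sum.inr_getRight, hinv]; rfl
  · show (g (Sum.inl _)).isRight = true
    rw [Sum.inl_getLeft, hinv]; rfl
  · intro x
    apply Subtype.ext
    apply Sum.inl_injective
    rw [Sum.inl_getLeft, Sum.inr_getRight, hinv]
  · intro y
    apply Subtype.ext
    apply Sum.inr_injective
    rw [Sum.inr_getRight, Sum.inl_getLeft, hinv]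

private lemma glue_cases {f' f : Fin k ⊕ Fin k → Fin k ⊕ Fin k}
    {x y : Fin k ⊕ (Fin k ⊕ Fin k)} (h : glueRel k f' f x y) :
    (∃ t, x = Sum.inl t ∧ y = emb1 k (f' (Sum.inl t))) ∨
      (∃ m, x = Sum.inr (Sum.inl m) ∧
        (y = emb1 k (f' (Sum.inr m)) ∨ y = emb2 k (f (Sum.inl m)))) ∨
      (∃ s, x = Sum.inr (Sum.inr s) ∧ y = emb2 k (f (Sum.inr s))) := by
  rcases h with ⟨p, rfl, rfl⟩ | ⟨p, rfl, rfl⟩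
  · rcases p with t | m
    · exact Or.inl ⟨t, rfl, rfl⟩
    · exact Or.inr (Or.inl ⟨m, rfl, Or.inl rfl⟩)
  · rcases p with m | s
    · exact Or.inr (Or.inl ⟨m, rfl, Or.inr rfl⟩)
    · exact Or.inr (Or.inr ⟨s, rfl, rfl⟩)

/-- The path starting at a top node `p` whose component is
`p — m — s` never reaches another top node. -/
private lemma no_return3 {f' f : Fin k ⊕ Fin k → Fin k ⊕ Fin k} {p m s : Fin k}
    (h1 : f' (Sum.inl p) = Sum.inr m) (g1 : f' (Sum.inr m) = Sum.inl p)
    (h2 : f (Sum.inl m) = Sum.inr s) (g2 : f (Sum.inr s) = Sum.inl m)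
    {q : Fin k}
    (hpath : Relation.ReflTransGen (glueRel k f' f) (Sum.inl p) (Sum.inl q)) :
    q = p := by
  have main : ∀ y, Relation.ReflTransGen (glueRel k f' f) (Sum.inl p) y →
      (y = Sum.inl p ∨ y = Sum.inr (Sum.inl m) ∨ y = Sum.inr (Sum.inr s)) := by
    intro y hy
    induction hy with
    | refl => exact Or.inl rfl
    | tail _ hxy ih =>
      rcases glue_cases hxy with ⟨t, hxt, rfl⟩ | ⟨n, hxn, rfl | rfl⟩ | ⟨s', hxs, rfl⟩ <;>
        rcases ih with rfl | rfl | rfl <;>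
          simp_all [emb1, emb2]
  have := main _ hpath
  rcases this with h | h | h
  · exact Sum.inl.inj h
  · exact absurd h (by simp)
  · exact absurd h (by simp)

/-- The path starting at a top node `p` whose component is
`p — m — m' — m'' — s` never reaches another top node. -/
private lemma no_return5 {f' f : Fin k ⊕ Fin k → Fin k ⊕ Fin k} {p m m' m'' s : Fin k}
    (h1 : f' (Sum.inl p) = Sum.inr m) (g1 : f' (Sum.inr m) = Sum.inl p)
    (h2 : f (Sum.inl m) = Sum.inl m') (g2 : f (Sum.inl m') = Sum.inl m)
    (h3 : f' (Sum.inr m') = Sum.inr m'') (g3 : f' (Sum.inr m'') = Sum.inr m')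
    (h4 : f (Sum.inl m'') = Sum.inr s) (g4 : f (Sum.inr s) = Sum.inl m'')
    {q : Fin k}
    (hpath : Relation.ReflTransGen (glueRel k f' f) (Sum.inl p) (Sum.inl q)) :
    q = p := by
  have main : ∀ y, Relation.ReflTransGen (glueRel k f' f) (Sum.inl p) y →
      (y = Sum.inl p ∨ y = Sum.inr (Sum.inl m) ∨ y = Sum.inr (Sum.inl m') ∨
        y = Sum.inr (Sum.inl m'') ∨ y = Sum.inr (Sum.inr s)) := by
    intro y hy
    induction hy with
    | refl => exact Or.inl rfl
    | tail _ hxy ih =>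
      rcases glue_cases hxy with ⟨t, hxt, rfl⟩ | ⟨n, hxn, rfl | rfl⟩ | ⟨s', hxs, rfl⟩ <;>
        rcases ih with rfl | rfl | rfl | rfl | rfl <;>
          simp_all [emb1, emb2]
  have := main _ hpath
  rcases this with h | h | h | h | h
  · exact Sum.inl.inj h
  all_goals exact absurd h (by simp)

end Aux

/-- If `d` has `a`-value `1` with unique non-propagating north edge joining
`i` to `i+1`, `d'` has `a`-value `1` with unique non-propagating south edge
joining `j'` to `(j+1)'`, and `j ∈ {i-1, i, i+1}`, then the concatenation
`d'd` has `a`-value `1` (i.e. exactly two of its north nodes lie on a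
non-propagating north edge). -/
theorem stmt_16 (k : ℕ) (f' f : Fin k ⊕ Fin k → Fin k ⊕ Fin k)
    (hinv' : ∀ x, f' (f' x) = x) (hfix' : ∀ x, f' x ≠ x)
    (hinv : ∀ x, f (f x) = x) (hfix : ∀ x, f x ≠ x)
    (i : ℕ) (hi : i + 1 < k)
    (hdedge : f (Sum.inl ⟨i, by omega⟩) = Sum.inl ⟨i + 1, hi⟩)
    (hda : Nat.card {p : Fin k | (f (Sum.inl p)).isLeft = true} = 2)
    (j : ℕ) (hj : j + 1 < k)
    (hd'edge : f' (Sum.inr ⟨j, by omega⟩) = Sum.inr ⟨j + 1, hj⟩)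
    (hd'a : Nat.card {p : Fin k | (f' (Sum.inl p)).isLeft = true} = 2)
    (hrange : j + 1 = i ∨ j = i ∨ j = i + 1) :
    Nat.card {p : Fin k | nonPropTop k f' f p} = 2 := by
  classical
  have i0 : Fin k := ⟨i, by omega⟩
  set I0 : Fin k := ⟨i, by omega⟩ with hI0
  set I1 : Fin k := ⟨i + 1, hi⟩ with hI1
  set J0 : Fin k := ⟨j, by omega⟩ with hJ0
  set J1 : Fin k := ⟨j + 1, hj⟩ with hJ1
  have e_i : f (Sum.inl I0) = Sum.inl I1 := hdedge
  have e_i' : f (Sum.inl I1) = Sum.inl I0 := by rw [← e_i, hinv]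
  have e_j : f' (Sum.inr J0) = Sum.inr J1 := hd'edge
  have e_j' : f' (Sum.inr J1) = Sum.inr J0 := by rw [← e_j, hinv']
  have hI01 : I0 ≠ I1 := by simp [hI0, hI1, Fin.ext_iff]
  have hJ01 : J0 ≠ J1 := by simp [hJ0, hJ1, Fin.ext_iff]
  -- the non-propagating north nodes of `d` are exactly `I0, I1`
  have hA : ∀ m : Fin k, (f (Sum.inl m)).isLeft = true → m = I0 ∨ m = I1 :=
    mem_pair_of_card_two hI01
      (by show (f (Sum.inl I0)).isLeft = true; rw [e_i]; rfl)
      (by show (f (Sum.inl I1)).isLeft = true; rw [e_i']; rfl) hda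
  have hA' : ∀ m : Fin k, m ≠ I0 → m ≠ I1 → ∃ s, f (Sum.inl m) = Sum.inr s := by
    intro m h0 h1
    cases hm : f (Sum.inl m) with
    | inl q => exact absurd (hA m (by rw [hm]; rfl)) (by tauto)
    | inr s => exact ⟨s, rfl⟩
  -- counting: the non-propagating south nodes of `d'` are exactly `J0, J1`
  have hcompl1 : {p : Fin k | (f' (Sum.inl p)).isLeft = true}ᶜ
      = {p : Fin k | (f' (Sum.inl p)).isRight = true} := by
    ext p
    simp only [Set.mem_compl_iff, Set.mem_setOf_eq]
    cases f' (Sum.inl p) <;> simp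
  have hcompl2 : {p : Fin k | (f' (Sum.inr p)).isLeft = true}ᶜ
      = {p : Fin k | (f' (Sum.inr p)).isRight = true} := by
    ext p
    simp only [Set.mem_compl_iff, Set.mem_setOf_eq]
    cases f' (Sum.inr p) <;> simp
  have hk1 : {p : Fin k | (f' (Sum.inl p)).isLeft = true}.ncard
      + {p : Fin k | (f' (Sum.inl p)).isRight = true}.ncard = k := by
    rw [← hcompl1, Set.ncard_add_ncard_compl]
    simp
  have hk2 : {p : Fin k | (f' (Sum.inr p)).isLeft = true}.ncard
      + {p : Fin k | (f' (Sum.inr p)).isRight = true}.ncard = k := by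
    rw [← hcompl2, Set.ncard_add_ncard_compl]
    simp
  have hcross := card_cross f' hinv'
  rw [Nat.card_coe_set_eq, Nat.card_coe_set_eq] at hcross
  have hd'a' : {p : Fin k | (f' (Sum.inl p)).isLeft = true}.ncard = 2 := by
    rw [← Nat.card_coe_set_eq]; exact hd'a
  have hSR : Nat.card {p : Fin k | (f' (Sum.inr p)).isRight = true} = 2 := by
    rw [Nat.card_coe_set_eq]; omega
  have hB : ∀ m : Fin k, (f' (Sum.inr m)).isRight = true → m = J0 ∨ m = J1 :=
    mem_pair_of_card_two hJ01
      (by show (f' (Sum.inr J0)).isRight = true; rw [e_j]; rfl)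
      (by show (f' (Sum.inr J1)).isRight = true; rw [e_j']; rfl) hSR
  -- the key set identity
  have key : {p : Fin k | nonPropTop k f' f p}
      = {p : Fin k | (f' (Sum.inl p)).isLeft = true} := by
    ext p
    simp only [Set.mem_setOf_eq]
    constructor
    · rintro ⟨q, hqp, hpath⟩
      by_contra hL
      have hR : (f' (Sum.inl p)).isRight = true := by
        cases h : f' (Sum.inl p) <;> simp_all
      obtain ⟨m, hm⟩ := Sum.isRight_iff.mp hR
      have g1 : f' (Sum.inr m) = Sum.inl p := by rw [← hm, hinv']
      have hmj0 : m ≠ J0 := by rintro rfl; rw [e_j] at g1; simp at g1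
      have hmj1 : m ≠ J1 := by rintro rfl; rw [e_j'] at g1; simp at g1
      cases hfm : f (Sum.inl m) with
      | inr s =>
        have g2 : f (Sum.inr s) = Sum.inl m := by rw [← hfm, hinv]
        exact hqp (no_return3 hm g1 hfm g2 hpath)
      | inl m' =>
        have g2 : f (Sum.inl m') = Sum.inl m := by rw [← hfm, hinv]
        have hmii : m = I0 ∨ m = I1 := hA m (by rw [hfm]; rfl)
        -- in each case of `hrange` determine the rest of the component
        rcases hrange with hr | hr | hr
        · -- j + 1 = i
          have hIJ : I0 = J1 := by simp [hI0, hJ1, Fin.ext_iff, hr]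
          have hm1 : m = I1 := by
            rcases hmii with rfl | rfl
            · exact absurd hIJ hmj1
            · rfl
          subst hm1
          have hm' : m' = J1 := by
            rw [e_i'] at hfm
            rw [← hIJ, ← Sum.inl.inj hfm]
          subst hm'
          have h3 : f' (Sum.inr J1) = Sum.inr J0 := e_j'
          obtain ⟨s, h4⟩ : ∃ s, f (Sum.inl J0) = Sum.inr s := by
            apply hA' <;> simp [hI0, hI1, hJ0, Fin.ext_iff] <;> omega
          have g4 : f (Sum.inr s) = Sum.inl J0 := by rw [← h4, hinv]
          exact hqp (no_return5 hm g1 hfm g2 h3 e_j h4 g4 hpath)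
        · -- j = i
          rcases hmii with rfl | rfl
          · exact hmj0 (by simp [hI0, hJ0, Fin.ext_iff, hr])
          · exact hmj1 (by simp [hI1, hJ1, Fin.ext_iff, hr])
        · -- j = i + 1
          have hIJ : I1 = J0 := by simp [hI1, hJ0, Fin.ext_iff, hr]
          have hm1 : m = I0 := by
            rcases hmii with rfl | rfl
            · rfl
            · exact absurd hIJ hmj0
          subst hm1
          have hm' : m' = J0 := by
            rw [e_i] at hfm
            rw [← hIJ, ← Sum.inl.inj hfm]
          subst hm'
          obtain ⟨s, h4⟩ : ∃ s, f (Sum.inl J1) = Sum.inr s := by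
            apply hA' <;> simp [hI0, hI1, hJ1, Fin.ext_iff] <;> omega
          have g4 : f (Sum.inr s) = Sum.inl J1 := by rw [← h4, hinv]
          exact hqp (no_return5 hm g1 hfm g2 e_j e_j' h4 g4 hpath)
    · intro hL
      obtain ⟨q, hq⟩ := Sum.isLeft_iff.mp hL
      refine ⟨q, ?_, Relation.ReflTransGen.single (Or.inl ⟨Sum.inl p, rfl, ?_⟩)⟩
      · intro h
        exact hfix' (Sum.inl p) (by rw [hq, h])
      · rw [hq]; rfl
  rw [key]
  exact hd'a
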